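/- arXiv:1410.4324 — 6 statements merged into one kernel-verified Lean document; each statement's English description precedes it below -/
import Mathlib

section
/- Let X be a real Banach space with x₀ ∈ X such that ‖x₀‖ > 1, and let C = closure of the convex hull of B_X ∪ {x₀, −x₀}, where B_X is the closed unit ball. Then C is the closed unit ball of an equivalent norm on X, and x₀ is a denting point of C. -/
open Metric Set

/-! If `f` is a norming functional for `x₀` (`‖f‖ = 1`, `f x₀ = ‖x₀‖`), then every point of
`B_X ∪ {x₀, -x₀}` satisfies `‖x - x₀‖ ≤ K (f x₀ - f x)` with `K = (‖x₀‖ + 1) / (‖x₀‖ - 1)`.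
This cone condition is closed and convex, so it passes to `C`. Hence `f` attains its supremum
over `C` at `x₀`, and the slice `{x ∈ C | f x > f x₀ - α}` lies in the ball of radius `K α`
around `x₀`. -/

section Slices

variable {E : Type*} [SeminormedAddCommGroup E] [NormedSpace ℝ E]

def slice (C : Set E) (f : E →L[ℝ] ℝ) (α : ℝ) : Set E :=
  {x ∈ C | sSup (f '' C) - α < f x}

def IsDentingPoint (C : Set E) (x₀ : E) : Prop :=
  ∀ ε > 0, ∃ (f : E →L[ℝ] ℝ) (α : ℝ), f ≠ 0 ∧ 0 < α ∧ x₀ ∈ slice C f α ∧ diam (slice C f α) < ε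

def IsEquivNormUnitBall (C : Set E) : Prop :=
  IsClosed C ∧ Bornology.IsBounded C ∧ Convex ℝ C ∧ (∀ x ∈ C, -x ∈ C) ∧ 0 ∈ interior C

theorem isEquivNormUnitBall_closure_convexHull {S : Set E} (hS : Bornology.IsBounded S)
    (hneg : -S = S) (h0 : 0 ∈ interior S) : IsEquivNormUnitBall (closure (convexHull ℝ S)) := by
  refine ⟨isClosed_closure, (isBounded_convexHull.2 hS).closure,
    (convex_convexHull ℝ S).closure, fun x hx => ?_, ?_⟩
  · rw [← hneg, convexHull_neg, ← neg_closure]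
    exact neg_mem_neg.2 hx
  · exact interior_mono ((subset_convexHull ℝ S).trans subset_closure) h0

theorem convex_setOf_norm_sub_le_mul (f : E →L[ℝ] ℝ) (x₀ : E) (K : ℝ) :
    Convex ℝ {x | ‖x - x₀‖ ≤ K * (f x₀ - f x)} := by
  have h : ConvexOn ℝ univ fun x => dist x x₀ + K * f x :=
    (convexOn_dist x₀ convex_univ).add ((K • f.toLinearMap).convexOn convex_univ)
  simpa [dist_eq_norm, mul_sub, ← le_sub_iff_add_le] using h.convex_le (K * f x₀)

theorem isClosed_setOf_norm_sub_le_mul (f : E →L[ℝ] ℝ) (x₀ : E) (K : ℝ) :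
    IsClosed {x | ‖x - x₀‖ ≤ K * (f x₀ - f x)} :=
  isClosed_le (by fun_prop) (by fun_prop)

theorem closure_convexHull_subset_setOf_norm_sub_le_mul {S : Set E} {f : E →L[ℝ] ℝ} {x₀ : E}
    {K : ℝ} (hS : ∀ x ∈ S, ‖x - x₀‖ ≤ K * (f x₀ - f x)) :
    closure (convexHull ℝ S) ⊆ {x | ‖x - x₀‖ ≤ K * (f x₀ - f x)} :=
  closure_minimal (convexHull_min hS (convex_setOf_norm_sub_le_mul f x₀ K))
    (isClosed_setOf_norm_sub_le_mul f x₀ K)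

theorem slice_subset_closedBall_of_norm_sub_le_mul {C : Set E} {f : E →L[ℝ] ℝ} {x₀ : E} {K : ℝ}
    (hK : 0 < K) (hx₀ : x₀ ∈ C) (hC : ∀ x ∈ C, ‖x - x₀‖ ≤ K * (f x₀ - f x)) {α : ℝ}
    (hα : 0 < α) : x₀ ∈ slice C f α ∧ slice C f α ⊆ closedBall x₀ (K * α) := by
  have hsup : sSup (f '' C) = f x₀ := by
    refine IsGreatest.csSup_eq ⟨mem_image_of_mem f hx₀, ?_⟩
    rintro _ ⟨x, hx, rfl⟩
    nlinarith [hC x hx, norm_nonneg (x - x₀)]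
  refine ⟨⟨hx₀, by linarith⟩, fun x ⟨hx, hfx⟩ => ?_⟩
  rw [hsup] at hfx
  rw [mem_closedBall, dist_eq_norm]
  nlinarith [hC x hx]

theorem isDentingPoint_of_norm_sub_le_mul {C : Set E} {f : E →L[ℝ] ℝ} {x₀ : E} {K : ℝ}
    (hf : f ≠ 0) (hK : 0 < K) (hx₀ : x₀ ∈ C) (hC : ∀ x ∈ C, ‖x - x₀‖ ≤ K * (f x₀ - f x)) :
    IsDentingPoint C x₀ := by
  intro ε hε
  have hα : 0 < ε / (4 * K) := by positivity
  obtain ⟨hmem, hball⟩ := slice_subset_closedBall_of_norm_sub_le_mul hK hx₀ hC hα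
  refine ⟨f, ε / (4 * K), hf, hα, hmem, ?_⟩
  calc diam (slice C f (ε / (4 * K)))
      ≤ diam (closedBall x₀ (K * (ε / (4 * K)))) := diam_mono hball isBounded_closedBall
    _ ≤ 2 * (K * (ε / (4 * K))) := diam_closedBall (by positivity)
    _ < ε := by field_simp; linarith

theorem norm_sub_le_mul_of_mem_closedBall_union_pair {f : E →L[ℝ] ℝ} (hf : ‖f‖ ≤ 1) {x₀ : E}
    (hfx₀ : f x₀ = ‖x₀‖) (hx₀ : 1 < ‖x₀‖) {x : E} (hx : x ∈ closedBall 0 1 ∪ {x₀, -x₀}) :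
    ‖x - x₀‖ ≤ (‖x₀‖ + 1) / (‖x₀‖ - 1) * (f x₀ - f x) := by
  have hpos : 0 < ‖x₀‖ - 1 := by linarith
  rw [div_mul_eq_mul_div, le_div_iff₀ hpos, hfx₀]
  rcases hx with hx | rfl | rfl
  · rw [mem_closedBall_zero_iff] at hx
    have hfx : f x ≤ 1 :=
      (le_abs_self _).trans ((f.le_opNorm x).trans (mul_le_one₀ hf (norm_nonneg x) hx))
    nlinarith [norm_sub_le x x₀]
  · simp [hfx₀]
  · rw [map_neg, hfx₀, ← neg_add', norm_neg, ← two_smul ℝ x₀, norm_smul, Real.norm_two]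
    nlinarith

end Slices

theorem statement1_general {X : Type*} [NormedAddCommGroup X] [NormedSpace ℝ X]
    (x₀ : X) (hx₀ : 1 < ‖x₀‖)
    (C : Set X) (hC : C = closure (convexHull ℝ (Metric.closedBall (0 : X) 1 ∪ {x₀, -x₀}))) :
    (IsClosed C ∧ Bornology.IsBounded C ∧ Convex ℝ C ∧ (∀ x ∈ C, -x ∈ C) ∧ 0 ∈ interior C) ∧
    (∀ ε > 0, ∃ (f : X →L[ℝ] ℝ) (α : ℝ), f ≠ 0 ∧ 0 < α ∧
      x₀ ∈ {x ∈ C | sSup (f '' C) - α < f x} ∧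
      Metric.diam {x ∈ C | sSup (f '' C) - α < f x} < ε) := by
  subst hC
  set S : Set X := closedBall 0 1 ∪ {x₀, -x₀}
  have hx₀S : x₀ ∈ S := by simp [S]
  have hnegS : -S = S := by
    simp only [S, union_neg, neg_insert, neg_singleton, neg_neg, neg_closedBall, neg_zero,
      pair_comm]
  have h0 : (0 : X) ∈ interior S :=
    interior_mono (ball_subset_closedBall.trans subset_union_left) (mem_interior_iff_mem_nhds.2
      (ball_mem_nhds 0 one_pos))
  obtain ⟨f, hf, hfx₀⟩ := exists_dual_vector ℝ x₀ (by linarith)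
  have hf0 : f ≠ 0 := by rintro rfl; simp at hfx₀; linarith
  have hK : 0 < (‖x₀‖ + 1) / (‖x₀‖ - 1) := div_pos (by linarith) (by linarith)
  have hcone := closure_convexHull_subset_setOf_norm_sub_le_mul (S := S) fun y hy =>
    norm_sub_le_mul_of_mem_closedBall_union_pair hf.le hfx₀ hx₀ hy
  exact ⟨isEquivNormUnitBall_closure_convexHull
      (isBounded_closedBall.union (toFinite _).isBounded) hnegS h0,
    isDentingPoint_of_norm_sub_le_mul hf0 hK (subset_closure (subset_convexHull ℝ S hx₀S)) hcone⟩

/-- If `‖x₀‖ > 1` and `C = closure (convexHull (B_X ∪ {x₀, -x₀}))`, then `C`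
is the closed unit ball of an equivalent norm on `X` (closed, bounded, convex, symmetric and
a neighborhood of `0`), and `x₀` is a denting point of `C`. -/
theorem statement1 {X : Type*} [NormedAddCommGroup X] [NormedSpace ℝ X] [CompleteSpace X]
    (x₀ : X) (hx₀ : 1 < ‖x₀‖)
    (C : Set X) (hC : C = closure (convexHull ℝ (Metric.closedBall (0 : X) 1 ∪ {x₀, -x₀}))) :
    (IsClosed C ∧ Bornology.IsBounded C ∧ Convex ℝ C ∧ (∀ x ∈ C, -x ∈ C) ∧ 0 ∈ interior C) ∧
    (∀ ε > 0, ∃ (f : X →L[ℝ] ℝ) (α : ℝ), f ≠ 0 ∧ 0 < α ∧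
      x₀ ∈ {x ∈ C | sSup (f '' C) - α < f x} ∧
      Metric.diam {x ∈ C | sSup (f '' C) - α < f x} < ε) :=
  statement1_general x₀ hx₀ C hC
end

section
/- If a separation argument applies: let X be a Banach space, B a closed bounded convex set, x₀ ∉ B, and x* ∈ S_{X*} with x*(x₀) > M := sup x*(B). Then for 0 < α < (x*(x₀) − M)·ε / (2(β + ‖x₀‖)) with β = sup_{x∈B} ‖x‖, every pair of points y, z in conv(B ∪ {x₀}) with x*(y), x*(z) > x*(x₀) − α satisfies ‖y − z‖ < ε. -/
/-!
Every point of `conv (B ∪ {x₀})` is `w = x₀ + c (b - x₀)` with `b ∈ B` and `c ∈ [0, 1]`.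
Since `x*(b) ≤ M`, the drop `x*(x₀) - x*(w)` is at least `c (x*(x₀) - M)`, while
`‖w - x₀‖ ≤ c (β + ‖x₀‖)`. So a point of the slice `x*(w) > x*(x₀) - α` has
`c < α / (x*(x₀) - M)` and lies within `ε / 2` of `x₀`; two such points are within `ε`.
-/

open Metric Set

section Slice

variable {X : Type*} [NormedAddCommGroup X] [NormedSpace ℝ X]

theorem norm_sub_mul_le_of_mem_convexHull_union_singleton {B : Set X} (hBconv : Convex ℝ B)
    (hBne : B.Nonempty) (f : X →ₗ[ℝ] ℝ) {M β : ℝ} (hfM : ∀ b ∈ B, f b ≤ M)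
    (hβ : ∀ b ∈ B, ‖b‖ ≤ β) {x₀ : X} (hMx₀ : M ≤ f x₀) {w : X}
    (hw : w ∈ convexHull ℝ (B ∪ {x₀})) :
    ‖w - x₀‖ * (f x₀ - M) ≤ (f x₀ - f w) * (β + ‖x₀‖) := by
  rw [union_singleton, convexHull_insert hBne, hBconv.convexHull_eq, mem_convexJoin] at hw
  obtain ⟨x, hx, b, hb, a, c, -, hc, hac, rfl⟩ := hw
  subst x
  obtain rfl : a = 1 - c := by linarith
  have hsub : (1 - c) • x₀ + c • b - x₀ = c • (b - x₀) := by module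
  have hdrop : f x₀ - f ((1 - c) • x₀ + c • b) = c * (f x₀ - f b) := by
    simp only [map_add, map_smul, smul_eq_mul]; ring
  have hnorm : ‖b - x₀‖ ≤ β + ‖x₀‖ := (norm_sub_le b x₀).trans (by linarith [hβ b hb])
  rw [hsub, hdrop, norm_smul, Real.norm_of_nonneg hc]
  have hD : 0 ≤ β + ‖x₀‖ := by linarith [norm_nonneg b, hβ b hb, norm_nonneg x₀]
  calc c * ‖b - x₀‖ * (f x₀ - M) ≤ c * (β + ‖x₀‖) * (f x₀ - M) := by
        gcongr
    _ ≤ c * (f x₀ - f b) * (β + ‖x₀‖) := by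
        rw [mul_right_comm]; gcongr; linarith [hfM b hb]

theorem norm_sub_lt_of_mem_convexHull_union_singleton {B : Set X} (hBconv : Convex ℝ B)
    (hBne : B.Nonempty) (f : X →ₗ[ℝ] ℝ) {M β : ℝ} (hfM : ∀ b ∈ B, f b ≤ M)
    (hβ : ∀ b ∈ B, ‖b‖ ≤ β) {x₀ : X} (hsep : M < f x₀) {ε α : ℝ} (hα : 0 < α)
    (hα' : α < (f x₀ - M) * ε / (2 * (β + ‖x₀‖))) {w : X}
    (hw : w ∈ convexHull ℝ (B ∪ {x₀})) (hfw : f x₀ - α < f w) :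
    ‖w - x₀‖ < ε / 2 := by
  have hδ : 0 < f x₀ - M := sub_pos.2 hsep
  have hD : 0 < β + ‖x₀‖ := by
    obtain ⟨b, hb⟩ := hBne
    rcases (show 0 ≤ β + ‖x₀‖ by linarith [norm_nonneg b, hβ b hb, norm_nonneg x₀]).eq_or_lt
      with hD | hD
    · rw [← hD, mul_zero, div_zero] at hα'; linarith
    · exact hD
  have hαD : α * (2 * (β + ‖x₀‖)) < (f x₀ - M) * ε := (lt_div_iff₀ (by positivity)).1 hα'
  refine lt_of_mul_lt_mul_right ?_ hδ.le
  calc ‖w - x₀‖ * (f x₀ - M)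
      ≤ (f x₀ - f w) * (β + ‖x₀‖) :=
        norm_sub_mul_le_of_mem_convexHull_union_singleton hBconv hBne f hfM hβ hsep.le hw
    _ < α * (β + ‖x₀‖) := by gcongr; linarith
    _ < ε / 2 * (f x₀ - M) := by linarith

end Slice

theorem statement2_general {X : Type*} [NormedAddCommGroup X] [NormedSpace ℝ X]
    (B : Set X) (hBbdd : Bornology.IsBounded B) (hBconv : Convex ℝ B)
    (hBne : B.Nonempty) (x₀ : X)
    (f : X →L[ℝ] ℝ)
    (M : ℝ) (hM : M = sSup (f '' B)) (hsep : M < f x₀)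
    (β : ℝ) (hβ : β = sSup ((fun x => ‖x‖) '' B))
    (ε : ℝ)
    (α : ℝ) (hα : 0 < α) (hα' : α < (f x₀ - M) * ε / (2 * (β + ‖x₀‖)))
    (y z : X) (hy : y ∈ convexHull ℝ (B ∪ {x₀})) (hz : z ∈ convexHull ℝ (B ∪ {x₀}))
    (hfy : f x₀ - α < f y) (hfz : f x₀ - α < f z) :
    ‖y - z‖ < ε := by
  have hfM : ∀ b ∈ B, f b ≤ M := fun b hb =>
    hM ▸ le_csSup (f.lipschitz.isBounded_image hBbdd).bddAbove (mem_image_of_mem f hb)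
  have hβB : ∀ b ∈ B, ‖b‖ ≤ β := fun b hb =>
    hβ ▸ le_csSup (lipschitzWith_one_norm.isBounded_image hBbdd).bddAbove (mem_image_of_mem _ hb)
  have hy₀ := norm_sub_lt_of_mem_convexHull_union_singleton hBconv hBne (f : X →ₗ[ℝ] ℝ) hfM hβB
    hsep hα hα' hy hfy
  have hz₀ := norm_sub_lt_of_mem_convexHull_union_singleton hBconv hBne (f : X →ₗ[ℝ] ℝ) hfM hβB
    hsep hα hα' hz hfz
  calc ‖y - z‖ ≤ ‖y - x₀‖ + ‖x₀ - z‖ := norm_sub_le_norm_sub_add_norm_sub _ _ _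
    _ < ε := by rw [norm_sub_rev x₀ z]; linarith

/-- quantitative separation estimate: any two points of `conv (B ∪ {x₀})` lying
in the slice `{x : x*(x) > x*(x₀) - α}` are at distance less than `ε`. -/
theorem statement2 {X : Type*} [NormedAddCommGroup X] [NormedSpace ℝ X] [CompleteSpace X]
    (B : Set X) (hBclosed : IsClosed B) (hBbdd : Bornology.IsBounded B) (hBconv : Convex ℝ B)
    (hBne : B.Nonempty) (x₀ : X) (hx₀ : x₀ ∉ B)
    (f : X →L[ℝ] ℝ) (hf : ‖f‖ = 1)
    (M : ℝ) (hM : M = sSup (f '' B)) (hsep : M < f x₀)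
    (β : ℝ) (hβ : β = sSup ((fun x => ‖x‖) '' B))
    (ε : ℝ) (hε : 0 < ε)
    (α : ℝ) (hα : 0 < α) (hα' : α < (f x₀ - M) * ε / (2 * (β + ‖x₀‖)))
    (y z : X) (hy : y ∈ convexHull ℝ (B ∪ {x₀})) (hz : z ∈ convexHull ℝ (B ∪ {x₀}))
    (hfy : f x₀ - α < f y) (hfz : f x₀ - α < f z) :
    ‖y - z‖ < ε :=
  statement2_general B hBbdd hBconv hBne x₀ f M hM hsep β hβ ε α hα hα' y z hy hz hfy hfz
end

section
/- Let X be a Banach space with the diameter two property (every nonempty relatively weakly open subset of B_X has diameter 2), and let Y be a closed subspace such that the quotient X/Y is finite-dimensional. Then Y has the diameter two property: every nonempty relatively weakly open subset of B_Y has diameter 2. -/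
/-!
A relatively weakly open subset of `B_Y` is the trace on `B_Y` of a weakly open set `W` of `X`
(Hahn–Banach), and around each of its points `W` contains a weakly open `U` together with a fixed
norm ball around every point of `U`. As `X/Y` is finite-dimensional, the quotient map is
weak-to-norm continuous, so `U` can be shrunk until each point of `U ∩ B_X` is within `r` of `Y`,
hence within `2r` of a point of `B_Y`, which still lies in `W`. So the given set is `2r`-dense in
`U ∩ B_X`, which has diameter `2`.
-/

open Metric Set Topology

section WeakTopology

variable {𝕜 E F : Type*} [RCLike 𝕜] [NormedAddCommGroup E] [NormedSpace 𝕜 E]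

theorem WeakSpace.isInducing_map_subtypeL (Y : Submodule 𝕜 E) :
    IsInducing (WeakSpace.map Y.subtypeL) := by
  choose ext hext using fun l : StrongDual 𝕜 Y => exists_extension_norm_eq Y l
  have hφ : Continuous fun (x : WeakSpace 𝕜 E) (l : StrongDual 𝕜 Y) => ext l x :=
    continuous_pi fun l => WeakBilin.eval_continuous _ (ext l)
  refine IsInducing.of_comp (WeakSpace.map Y.subtypeL).continuous hφ ?_
  convert (⟨rfl⟩ : IsInducing fun (y : WeakSpace 𝕜 Y) (l : StrongDual 𝕜 Y) => l y) using 1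
  funext y l
  exact (hext l).1 y

theorem WeakSpace.exists_isOpen_preimage_subtype {Y : Submodule 𝕜 E} {V : Set Y}
    (hV : @IsOpen (WeakSpace 𝕜 Y) _ V) :
    ∃ W : Set E, @IsOpen (WeakSpace 𝕜 E) _ W ∧ ((↑) : Y → E) ⁻¹' W = V :=
  (WeakSpace.isInducing_map_subtypeL Y).isOpen_iff.mp hV

theorem ContinuousLinearMap.continuous_weakSpace_of_finiteDimensional [NormedAddCommGroup F]
    [NormedSpace 𝕜 F] [FiniteDimensional 𝕜 F] (T : E →L[𝕜] F) :
    @Continuous (WeakSpace 𝕜 E) F _ _ T := by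
  have : FiniteDimensional 𝕜 (WeakSpace 𝕜 F) := (toWeakSpace 𝕜 F).finiteDimensional
  exact ((toWeakSpace 𝕜 F).symm.toLinearMap.continuous_of_finiteDimensional).comp
    (WeakSpace.map T).continuous

theorem WeakSpace.exists_isOpen_add_ball_subset {W : Set E} (hW : @IsOpen (WeakSpace 𝕜 E) _ W)
    {v : E} (hv : v ∈ W) : ∃ U : Set E, @IsOpen (WeakSpace 𝕜 E) _ U ∧ v ∈ U ∧
      ∃ δ > 0, ∀ x ∈ U, ∀ z ∈ ball (0 : E) δ, x + z ∈ W := by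
  have hadd : @IsOpen (WeakSpace 𝕜 E × WeakSpace 𝕜 E) _ ((fun p => p.1 + p.2) ⁻¹' W) :=
    hW.preimage continuous_add
  obtain ⟨U, N, hU, hN, hvU, h0N, hUN⟩ := isOpen_prod_iff.mp hadd v 0
    (show v + (0 : E) ∈ W by rwa [add_zero])
  obtain ⟨δ, hδ, hball⟩ :=
    isOpen_iff.mp (hN.preimage (toWeakSpaceCLM 𝕜 E).continuous) 0 h0N
  exact ⟨U, hU, hvU, δ, hδ, fun x hx z hz => hUN (mk_mem_prod hx (hball hz))⟩

end WeakTopology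

theorem Submodule.exists_mem_norm_le_one_dist_lt_two_mul {E : Type*} [NormedAddCommGroup E]
    [NormedSpace ℝ E] {Y : Submodule ℝ E} {x : E} (hx : ‖x‖ ≤ 1) {r : ℝ}
    (hr : infDist x Y < r) : ∃ y ∈ Y, ‖y‖ ≤ 1 ∧ dist x y < 2 * r := by
  obtain ⟨y₀, hy₀Y, hxy₀⟩ := (infDist_lt_iff ⟨0, Y.zero_mem⟩).mp hr
  set d := dist x y₀
  have hd : 0 ≤ d := dist_nonneg
  have hy₀ : ‖y₀‖ ≤ 1 + d := by
    have := norm_le_insert' y₀ x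
    rw [← dist_eq_norm, dist_comm] at this
    linarith
  have hshrink : dist y₀ ((1 + d)⁻¹ • y₀) ≤ d := by
    rw [dist_eq_norm, show y₀ - (1 + d)⁻¹ • y₀ = (d / (1 + d)) • y₀ by
      rw [show d / (1 + d) = 1 - (1 + d)⁻¹ by field_simp; ring, sub_smul, one_smul],
      norm_smul, Real.norm_of_nonneg (by positivity)]
    calc d / (1 + d) * ‖y₀‖ ≤ d / (1 + d) * (1 + d) := by gcongr
      _ = d := div_mul_cancel₀ d (by positivity)
  refine ⟨(1 + d)⁻¹ • y₀, Y.smul_mem _ hy₀Y, ?_, ?_⟩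
  · rw [norm_smul, Real.norm_of_nonneg (by positivity)]
    exact inv_mul_le_one_of_le₀ hy₀ (by positivity)
  · calc dist x ((1 + d)⁻¹ • y₀) ≤ d + d := (dist_triangle _ _ _).trans (by gcongr)
      _ < 2 * r := by linarith

theorem WeakSpace.exists_isOpen_inter_closedBall_subset_thickening {X : Type*}
    [NormedAddCommGroup X] [NormedSpace ℝ X] {Y : Submodule ℝ X} (hY : IsClosed (Y : Set X))
    [FiniteDimensional ℝ (X ⧸ Y)] {V : Set Y} (hV : @IsOpen (WeakSpace ℝ Y) _ V) {v : Y}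
    (hv : v ∈ V) {r : ℝ} (hr : 0 < r) :
    ∃ U : Set X, @IsOpen (WeakSpace ℝ X) _ U ∧ (v : X) ∈ U ∧
      U ∩ closedBall 0 1 ⊆ thickening r ((↑) '' (V ∩ closedBall (0 : Y) 1)) := by
  obtain ⟨W, hW, rfl⟩ := WeakSpace.exists_isOpen_preimage_subtype hV
  obtain ⟨U, hU, hvU, δ, hδ, hUW⟩ := WeakSpace.exists_isOpen_add_ball_subset hW hv
  have hq : @Continuous (WeakSpace ℝ X) _ _ _ Y.mkQL := by
    have := hY
    exact Y.mkQL.continuous_weakSpace_of_finiteDimensional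
  set s := min δ r
  have hs : 0 < s / 2 := by positivity
  refine ⟨U ∩ Y.mkQL ⁻¹' ball 0 (s / 2), hU.inter (isOpen_ball.preimage hq),
    ⟨hvU, by simpa [(Submodule.Quotient.mk_eq_zero Y).mpr v.2] using hs⟩, ?_⟩
  rintro x ⟨⟨hxU, hxs⟩, hx⟩
  have hxY : infDist x Y < s / 2 := by
    have hnorm : ‖Y.mkQL x‖ = infDist x Y := QuotientAddGroup.norm_mk x
    rwa [mem_preimage, mem_ball_zero_iff, hnorm] at hxs
  obtain ⟨y, hyY, hy, hxy⟩ :=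
    Y.exists_mem_norm_le_one_dist_lt_two_mul (mem_closedBall_zero_iff.mp hx) hxY
  have hxy' : dist x y < s := by linarith
  have hyW : y ∈ W := by
    simpa using hUW x hxU (y - x) (by
      rw [mem_ball_zero_iff, ← dist_eq_norm, dist_comm]; exact hxy'.trans_le (min_le_left _ _))
  exact mem_thickening_iff.mpr
    ⟨y, ⟨⟨y, hyY⟩, ⟨hyW, by simpa using hy⟩, rfl⟩, hxy'.trans_le (min_le_right _ _)⟩

theorem statement4_general {X : Type*} [NormedAddCommGroup X] [NormedSpace ℝ X]
    (hX : ∀ U : Set X, @IsOpen (WeakSpace ℝ X) _ U → (U ∩ closedBall (0 : X) 1).Nonempty →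
      Metric.diam (U ∩ closedBall (0 : X) 1) = 2)
    (Y : Subspace ℝ X) (hYclosed : IsClosed (Y : Set X))
    (hquot : FiniteDimensional ℝ (X ⧸ Y)) :
    ∀ V : Set Y, @IsOpen (WeakSpace ℝ Y) _ V → (V ∩ closedBall (0 : Y) 1).Nonempty →
      Metric.diam (V ∩ closedBall (0 : Y) 1) = 2 := by
  rintro V hV ⟨v, hvV, hvB⟩
  have hVB : Bornology.IsBounded (V ∩ closedBall (0 : Y) 1) :=
    isBounded_closedBall.subset inter_subset_right
  refine le_antisymm ((diam_mono inter_subset_right isBounded_closedBall).trans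
    ((diam_closedBall zero_le_one).trans_eq (mul_one 2))) (le_of_forall_pos_le_add fun ε hε => ?_)
  obtain ⟨U, hU, hvU, hUV⟩ :=
    WeakSpace.exists_isOpen_inter_closedBall_subset_thickening hYclosed hV hvV (half_pos hε)
  have hT : diam (((↑) : Y → X) '' (V ∩ closedBall 0 1)) = diam (V ∩ closedBall 0 1) :=
    isometry_subtype_coe.diam_image _
  calc 2 = diam (U ∩ closedBall 0 1) := (hX U hU ⟨v, hvU, by simpa using hvB⟩).symm
    _ ≤ diam (thickening (ε / 2) (((↑) : Y → X) '' (V ∩ closedBall 0 1))) :=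
      diam_mono hUV (isometry_subtype_coe.lipschitz.isBounded_image hVB).thickening
    _ ≤ diam (((↑) : Y → X) '' (V ∩ closedBall 0 1)) + 2 * (ε / 2) :=
      diam_thickening_le _ (half_pos hε).le
    _ = diam (V ∩ closedBall (0 : Y) 1) + ε := by rw [hT]; ring

/-- the diameter two property passes from `X` to a closed subspace `Y` whenever
the quotient `X/Y` is finite-dimensional. Weakly open sets are the open sets of the weak
topology `WeakSpace ℝ _`. -/
theorem statement4 {X : Type*} [NormedAddCommGroup X] [NormedSpace ℝ X] [CompleteSpace X]
    (hX : ∀ U : Set X, @IsOpen (WeakSpace ℝ X) _ U → (U ∩ closedBall (0 : X) 1).Nonempty →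
      Metric.diam (U ∩ closedBall (0 : X) 1) = 2)
    (Y : Subspace ℝ X) (hYclosed : IsClosed (Y : Set X))
    (hquot : FiniteDimensional ℝ (X ⧸ Y)) :
    ∀ V : Set Y, @IsOpen (WeakSpace ℝ Y) _ V → (V ∩ closedBall (0 : Y) 1).Nonempty →
      Metric.diam (V ∩ closedBall (0 : Y) 1) = 2 :=
  statement4_general hX Y hYclosed hquot
end

section
/- Let X be a Banach space with weakly octahedral norm and Y a finite-dimensional subspace of X. Then X/Y has weakly octahedral norm; equivalently, Y° = (X/Y)* has the weak-star diameter two property: every nonempty relatively weak-star open subset of B_{Y°} has diameter 2. -/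
open Metric Set

/-- The norm of `Z` is weakly octahedral: for every finite-dimensional subspace `M`, every
`f ∈ B_{Z*}` and every `ε > 0` there is `y ∈ S_Z` with
`‖x + y‖ ≥ (1-ε)(|f x| + ‖y‖)` for all `x ∈ M`. -/
def WeaklyOctahedral (Z : Type*) [NormedAddCommGroup Z] [NormedSpace ℝ Z] : Prop :=
  ∀ M : Subspace ℝ Z, FiniteDimensional ℝ M →
    ∀ f : StrongDual ℝ Z, ‖f‖ ≤ 1 → ∀ ε > (0 : ℝ), ∃ y : Z, ‖y‖ = 1 ∧
      ∀ x ∈ M, (1 - ε) * (|f x| + ‖y‖) ≤ ‖x + y‖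

/-! Pull `M ⊆ X/Y` back to the finite-dimensional `π⁻¹(M) ⊆ X` and `f` back to `f ∘ π`, and take a
witness `y` in `X`. Every lift of `z + π y` (`z ∈ M`) is `x + y` with `x ∈ π⁻¹(M)`, so
`(1 - ε)(|f z| + 1) ≤ ‖z + π y‖`. Only `‖π y‖ ≤ 1` is guaranteed, but testing at `z = 0` gives
`‖π y‖ ≥ 1 - ε`, so normalising `π y` costs at most another `ε`. -/

theorem Submodule.finiteDimensional_comap_of_finiteDimensional_ker {K V W : Type*} [Field K]
    [AddCommGroup V] [Module K V] [AddCommGroup W] [Module K W] (f : V →ₗ[K] W)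
    [FiniteDimensional K (LinearMap.ker f)] (M : Submodule K W) [FiniteDimensional K M] :
    FiniteDimensional K (M.comap f) := by
  rw [← Submodule.fg_iff_finiteDimensional] at *
  refine Submodule.fg_of_fg_map_of_fg_inf_ker f ?_ ?_
  · exact ‹M.FG›.of_le (Submodule.map_comap_le f M)
  · exact ‹(LinearMap.ker f).FG›.of_le inf_le_right

theorem exists_norm_eq_one_of_exists_norm_le_one {Z : Type*} [SeminormedAddCommGroup Z]
    [NormedSpace ℝ Z] (M : Submodule ℝ Z) (f : StrongDual ℝ Z)
    (h : ∀ ε > (0 : ℝ), ∃ u : Z, ‖u‖ ≤ 1 ∧ ∀ x ∈ M, (1 - ε) * (|f x| + 1) ≤ ‖x + u‖)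
    {ε : ℝ} (hε : 0 < ε) :
    ∃ y : Z, ‖y‖ = 1 ∧ ∀ x ∈ M, (1 - ε) * (|f x| + ‖y‖) ≤ ‖x + y‖ := by
  obtain ⟨δ, hδ, hδε, hδ1⟩ : ∃ δ : ℝ, 0 < δ ∧ 2 * δ ≤ ε ∧ δ < 1 :=
    ⟨min (ε / 2) (1 / 2), by positivity, by linarith [min_le_left (ε / 2) (1 / 2)],
      by linarith [min_le_right (ε / 2) (1 / 2)]⟩
  obtain ⟨u, hu1, hu⟩ := h δ hδ
  have hu0 : 1 - δ ≤ ‖u‖ := by simpa using hu 0 M.zero_mem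
  have hu_pos : 0 < ‖u‖ := by linarith
  have hnorm : ‖‖u‖⁻¹ • u‖ = 1 := by
    rw [norm_smul, norm_inv, norm_norm, inv_mul_cancel₀ hu_pos.ne']
  have hdist : ‖‖u‖⁻¹ • u - u‖ = 1 - ‖u‖ := by
    rw [show ‖u‖⁻¹ • u - u = (‖u‖⁻¹ - 1) • u by rw [sub_smul, one_smul], norm_smul,
      Real.norm_of_nonneg (by simp [one_le_inv₀ hu_pos, hu1])]
    field_simp
  refine ⟨‖u‖⁻¹ • u, hnorm, fun x hx => ?_⟩
  have htri : ‖x + u‖ ≤ ‖x + ‖u‖⁻¹ • u‖ + ‖‖u‖⁻¹ • u - u‖ :=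
    calc ‖x + u‖ = ‖(x + ‖u‖⁻¹ • u) - (‖u‖⁻¹ • u - u)‖ := by abel_nf
      _ ≤ _ := norm_sub_le _ _
  have hfx : 0 ≤ |f x| := abs_nonneg _
  -- `(1 - 2δ)(|f x| + 1) ≤ (1 - δ)(|f x| + 1) - δ ≤ ‖x + u‖ - (1 - ‖u‖)`
  rw [hnorm]
  nlinarith [hu x hx]

theorem WeaklyOctahedral.of_exists_norm_le_one {Z : Type*} [NormedAddCommGroup Z]
    [NormedSpace ℝ Z]
    (h : ∀ M : Subspace ℝ Z, FiniteDimensional ℝ M → ∀ f : StrongDual ℝ Z, ‖f‖ ≤ 1 →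
      ∀ ε > (0 : ℝ), ∃ u : Z, ‖u‖ ≤ 1 ∧ ∀ x ∈ M, (1 - ε) * (|f x| + 1) ≤ ‖x + u‖) :
    WeaklyOctahedral Z := fun M hM f hf _ hε =>
  exists_norm_eq_one_of_exists_norm_le_one M f (h M hM f hf) hε

theorem norm_comp_mkQL_le {X : Type*} [SeminormedAddCommGroup X] [NormedSpace ℝ X]
    (Y : Subspace ℝ X) (f : StrongDual ℝ (X ⧸ Y)) :
    ‖f.comp Y.mkQL‖ ≤ ‖f‖ :=
  ContinuousLinearMap.opNorm_le_bound _ (norm_nonneg f) fun x =>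
    (f.le_opNorm _).trans (by gcongr; exact Submodule.Quotient.norm_mk_le Y x)

theorem statement10_general {X : Type*} [NormedAddCommGroup X] [NormedSpace ℝ X]
    (hX : WeaklyOctahedral X)
    (Y : Subspace ℝ X) [FiniteDimensional ℝ Y] [IsClosed (Y : Set X)] :
    WeaklyOctahedral (X ⧸ Y) := by
  refine WeaklyOctahedral.of_exists_norm_le_one fun M hM f hf ε hε => ?_
  have : FiniteDimensional ℝ (LinearMap.ker Y.mkQ) := by rwa [Submodule.ker_mkQ]
  obtain ⟨y, hy1, hy⟩ := hX (M.comap Y.mkQ)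
    (Submodule.finiteDimensional_comap_of_finiteDimensional_ker _ M)
    (f.comp Y.mkQL) ((norm_comp_mkQL_le Y f).trans hf) ε hε
  refine ⟨Y.mkQ y, hy1 ▸ Submodule.Quotient.norm_mk_le Y y, fun z hz => ?_⟩
  refine QuotientAddGroup.le_norm_iff.2 fun w hw => ?_
  have hwy : Y.mkQ (w - y) = z := by
    rw [map_sub, show Y.mkQ w = z + Y.mkQ y from hw, add_sub_cancel_right]
  simpa [hwy, hy1, hz] using hy (w - y) (by simpa [hwy])

/-- if `X` has weakly octahedral norm and `Y` is a finite-dimensional subspace,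
then `X/Y` has weakly octahedral norm. -/
theorem statement10 {X : Type*} [NormedAddCommGroup X] [NormedSpace ℝ X] [CompleteSpace X]
    (hX : WeaklyOctahedral X)
    (Y : Subspace ℝ X) [FiniteDimensional ℝ Y] [IsClosed (Y : Set X)] :
    WeaklyOctahedral (X ⧸ Y) :=
  statement10_general hX Y
end

section
/- The diameter two properties are not three-space properties: there exists a Banach space Z and a closed subspace W of Z such that both W and Z/W have the strong diameter two property (hence all diameter two properties), but Z fails the slice diameter two property (its unit ball has slices of arbitrarily small diameter). -/
/-!
Take `Z = c0 × c0` renormed so that its unit ball is the closed convex hull of the sup-norm ball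
and `±(2 e₀, 0)`. On the diagonal `W = {(x, x)}` the new norm is still the sup norm, and
`z ↦ (z₁ - z₂) / 2` is a norm-one map with kernel `W` and an isometric section `x ↦ (x, -x)`,
so both `W` and `Z / W` are isometric to `c0`. The space `c0` has the SD2P: given finitely
many slices, all the functionals are small on `e_N` for some `N`, so setting the `N`-th
coordinate of points of the slices to `±1` keeps them in the slices, and the two resulting
convex combinations are at distance `2`. But `(2 e₀, 0)` is a sharp vertex of the new ball:
the slice `{z₁(0) / 2 > 1 - α}` lies in the ball of radius `2α` around it.
-/

open Metric Set

variable {Z : Type*} [NormedAddCommGroup Z] [NormedSpace ℝ Z]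

/-- A slice of a set `C`: `{x ∈ C | f x > sup f(C) - α}`. -/
def Slice (C : Set Z) (f : Z →L[ℝ] ℝ) (α : ℝ) : Set Z :=
  {x ∈ C | sSup (f '' C) - α < f x}

/-- The convex combination `∑ wᵢ Sᵢ` of the sets `Sᵢ` with weights `wᵢ`. -/
def convComb {n : ℕ} (w : Fin n → ℝ) (S : Fin n → Set Z) : Set Z :=
  {y | ∃ x : Fin n → Z, (∀ i, x i ∈ S i) ∧ y = ∑ i, w i • x i}

/-- The strong diameter two property. -/
def SD2P (Z : Type*) [NormedAddCommGroup Z] [NormedSpace ℝ Z] : Prop :=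
  ∀ (n : ℕ) (w : Fin n → ℝ) (f : Fin n → Z →L[ℝ] ℝ) (α : Fin n → ℝ),
    (∀ i, 0 ≤ w i) → (∑ i, w i) = 1 → (∀ i, f i ≠ 0) → (∀ i, 0 < α i) →
    Metric.diam (convComb w (fun i => Slice (closedBall (0 : Z) 1) (f i) (α i))) = 2

section Slices

variable {Y : Type*} [NormedAddCommGroup Y] [NormedSpace ℝ Y]

lemma slice_subset (C : Set Z) (f : Z →L[ℝ] ℝ) (α : ℝ) : Slice C f α ⊆ C := fun _ h => h.1

lemma exists_mem_closedBall_sSup_sub_lt (f : Z →L[ℝ] ℝ) {α : ℝ} (hα : 0 < α) :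
    ∃ x ∈ closedBall (0 : Z) 1, sSup (f '' closedBall 0 1) - α < f x := by
  obtain ⟨-, ⟨x, hx, rfl⟩, hlt⟩ := exists_lt_of_lt_csSup
    ((nonempty_closedBall.2 zero_le_one).image f) (sub_lt_self _ hα)
  exact ⟨x, hx, hlt⟩

lemma image_slice_comp (g : Z →L[ℝ] Y) (C : Set Z) (f : Y →L[ℝ] ℝ) (α : ℝ) :
    g '' Slice C (f.comp g) α = Slice (g '' C) f α := by
  ext y
  simp only [Slice, mem_image, mem_ofPred_eq, ContinuousLinearMap.coe_comp, image_comp]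
  constructor
  · rintro ⟨x, ⟨hx, hfx⟩, rfl⟩
    exact ⟨⟨x, hx, rfl⟩, hfx⟩
  · rintro ⟨⟨x, hx, rfl⟩, hfx⟩
    exact ⟨x, ⟨hx, hfx⟩, rfl⟩

lemma image_convComb {F : Type*} [FunLike F Z Y] [LinearMapClass F ℝ Z Y] (g : F) {n : ℕ}
    (w : Fin n → ℝ) (S : Fin n → Set Z) : g '' convComb w S = convComb w (fun i => g '' S i) := by
  ext y
  constructor
  · rintro ⟨-, ⟨x, hx, rfl⟩, rfl⟩
    exact ⟨fun i => g (x i), fun i => mem_image_of_mem g (hx i), by simp [map_sum]⟩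
  · rintro ⟨y, hy, rfl⟩
    choose x hx hxy using hy
    exact ⟨∑ i, w i • x i, ⟨x, hx, rfl⟩, by simp [map_sum, hxy]⟩

lemma convComb_subset_closedBall {n : ℕ} {w : Fin n → ℝ} (hw : ∀ i, 0 ≤ w i)
    (hsum : ∑ i, w i = 1) {S : Fin n → Set Z} (hS : ∀ i, S i ⊆ closedBall 0 1) :
    convComb w S ⊆ closedBall (0 : Z) 1 := by
  rintro - ⟨x, hx, rfl⟩
  exact (convex_closedBall 0 1).sum_mem (fun i _ => hw i) hsum fun i _ => hS i (hx i)

lemma diam_eq_of_subset_closedBall {X : Type*} [PseudoMetricSpace X] {S : Set X} {x : X}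
    {r : ℝ} (hS : S ⊆ closedBall x r) {a b : X} (ha : a ∈ S) (hb : b ∈ S)
    (hab : 2 * r ≤ dist a b) : diam S = 2 * r := by
  refine le_antisymm ?_ (hab.trans (dist_le_diam_of_mem (isBounded_closedBall.subset hS) ha hb))
  exact (diam_mono hS isBounded_closedBall).trans (diam_closedBall (dist_nonneg.trans (hS ha)))

lemma SD2P.of_linearIsometryEquiv (e : Z ≃ₗᵢ[ℝ] Y) (h : SD2P Z) : SD2P Y := by
  intro n w f α hw hsum hf hα
  let g : Fin n → Z →L[ℝ] ℝ := fun i => (f i).comp (e : Z →L[ℝ] Y)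
  have hg : ∀ i, g i ≠ 0 := fun i hgi => hf i <| by
    ext y
    simpa [g] using DFunLike.congr_fun hgi (e.symm y)
  have hslice : ∀ i, Slice (closedBall (0 : Y) 1) (f i) (α i) =
      e '' Slice (closedBall (0 : Z) 1) (g i) (α i) := fun i => by
    have := image_slice_comp (e : Z →L[ℝ] Y) (closedBall 0 1) (f i) (α i)
    rw [ContinuousLinearEquiv.coe_coe, LinearIsometryEquiv.coe_toContinuousLinearEquiv,
      e.image_closedBall, map_zero] at this
    exact this.symm
  simp_rw [hslice]
  rw [← image_convComb e, ← h n w g α hw hsum hg hα]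
  exact e.isometry.diam_image _

end Slices

section QuotientIsometry

variable {E F : Type*} [NormedAddCommGroup E] [NormedSpace ℝ E] [NormedAddCommGroup F]
  [NormedSpace ℝ F]

lemma LinearMap.norm_mk_ker_eq {P : E →ₗ[ℝ] F} {s : F →ₗ[ℝ] E} (hPs : ∀ y, P (s y) = y)
    (hP : ∀ x, ‖P x‖ ≤ ‖x‖) (hs : ∀ y, ‖s y‖ ≤ ‖y‖) (x : E) :
    ‖(Submodule.Quotient.mk x : E ⧸ LinearMap.ker P)‖ = ‖P x‖ := by
  refine le_antisymm ?_ (QuotientAddGroup.le_norm_iff.2 fun m hm => ?_)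
  · have hx : (Submodule.Quotient.mk x : E ⧸ LinearMap.ker P) = Submodule.Quotient.mk (s (P x)) :=
      (Submodule.Quotient.eq _).2 (by simp [hPs])
    rw [hx]
    exact (Submodule.Quotient.norm_mk_le _ _).trans (hs _)
  · have hPm : P m = P x := by
      rw [← sub_eq_zero, ← map_sub, ← LinearMap.mem_ker, ← Submodule.Quotient.eq]
      exact hm
    exact hPm ▸ hP m

noncomputable def LinearMap.quotKerIsometryEquivOfRightInverse (P : E →ₗ[ℝ] F) (s : F →ₗ[ℝ] E)
    (hPs : ∀ y, P (s y) = y) (hP : ∀ x, ‖P x‖ ≤ ‖x‖) (hs : ∀ y, ‖s y‖ ≤ ‖y‖) :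
    (E ⧸ LinearMap.ker P) ≃ₗᵢ[ℝ] F :=
  { P.quotKerEquivOfSurjective (fun y => ⟨s y, hPs y⟩) with
    norm_map' := fun q => by
      obtain ⟨x, rfl⟩ := Submodule.Quotient.mk_surjective _ q
      exact (LinearMap.norm_mk_ker_eq hPs hP hs x).symm }

end QuotientIsometry

abbrev c0 : Type := ZeroAtInftyContinuousMap ℕ ℝ

namespace C0

lemma abs_apply_le_norm (x : c0) (n : ℕ) : |x n| ≤ ‖x‖ := by
  simpa using BoundedContinuousFunction.norm_coe_le_norm x.toBCF n

lemma norm_le_iff {x : c0} {C : ℝ} (hC : 0 ≤ C) : ‖x‖ ≤ C ↔ ∀ n, |x n| ≤ C := by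
  rw [← ZeroAtInftyContinuousMap.norm_toBCF_eq_norm, BoundedContinuousFunction.norm_le hC]
  simp [Real.norm_eq_abs]

lemma coe_sum {ι : Type*} (s : Finset ι) (g : ι → c0) : ⇑(∑ i ∈ s, g i) = ∑ i ∈ s, ⇑(g i) :=
  map_sum (AddMonoidHom.mk' (fun x : c0 => (x : ℕ → ℝ)) ZeroAtInftyContinuousMap.coe_add) g s

def single (N : ℕ) : c0 :=
  ⟨⟨fun m => if m = N then 1 else 0, continuous_of_discreteTopology⟩, by
    rw [Filter.cocompact_eq_cofinite]
    refine tendsto_const_nhds.congr' ?_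
    filter_upwards [Filter.eventually_cofinite_ne N] with m hm
    simp [hm]⟩

@[simp] lemma single_apply (N m : ℕ) : single N m = if m = N then 1 else 0 := rfl

lemma norm_smul_single (c : ℝ) (N : ℕ) : ‖c • single N‖ = |c| := by
  refine le_antisymm ((norm_le_iff (abs_nonneg c)).2 fun m => ?_) ?_
  · by_cases h : m = N <;> simp [h]
  · simpa using abs_apply_le_norm (c • single N) N

lemma sum_abs_apply_single_le (f : c0 →L[ℝ] ℝ) (s : Finset ℕ) :
    ∑ N ∈ s, |f (single N)| ≤ ‖f‖ := by
  classical
  set x : c0 := ∑ N ∈ s, (SignType.sign (f (single N)) : ℝ) • single N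
  have hx : ‖x‖ ≤ 1 := by
    refine (norm_le_iff zero_le_one).2 fun m => ?_
    simp only [x, coe_sum, Finset.sum_apply, ZeroAtInftyContinuousMap.coe_smul, Pi.smul_apply,
      single_apply, smul_eq_mul, mul_ite, mul_one, mul_zero, Finset.sum_ite_eq]
    split_ifs
    · rcases SignType.sign (f (single m)) with _ | _ | _ <;> simp
    · simp
  calc ∑ N ∈ s, |f (single N)| = f x := by simp [x, map_sum, sign_mul_self]
    _ ≤ ‖f‖ := (le_abs_self _).trans (f.unit_le_opNorm x hx)

lemma finite_setOf_le_abs_apply_single (f : c0 →L[ℝ] ℝ) {δ : ℝ} (hδ : 0 < δ) :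
    {N | δ ≤ |f (single N)|}.Finite := by
  by_contra hinf
  obtain ⟨s, hs, hcard⟩ := Set.Infinite.exists_subset_card_eq hinf (⌈‖f‖ / δ⌉₊ + 1)
  have hsum : (⌈‖f‖ / δ⌉₊ + 1 : ℕ) * δ ≤ ‖f‖ := by
    calc (⌈‖f‖ / δ⌉₊ + 1 : ℕ) * δ = ∑ N ∈ s, δ := by simp [hcard]
      _ ≤ ∑ N ∈ s, |f (single N)| := Finset.sum_le_sum fun N hN => hs hN
      _ ≤ ‖f‖ := sum_abs_apply_single_le f s
  have := Nat.le_ceil (‖f‖ / δ)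
  rw [div_le_iff₀ hδ] at this
  push_cast at hsum
  nlinarith

lemma exists_forall_abs_apply_single_lt {n : ℕ} (f : Fin n → c0 →L[ℝ] ℝ) {δ : Fin n → ℝ}
    (hδ : ∀ i, 0 < δ i) : ∃ N, ∀ i, |f i (single N)| < δ i := by
  obtain ⟨N, hN⟩ := (Set.finite_iUnion fun i =>
    finite_setOf_le_abs_apply_single (f i) (hδ i)).infinite_compl.nonempty
  simp only [Set.mem_compl_iff, Set.mem_iUnion, Set.mem_ofPred_eq, not_exists, not_le] at hN
  exact ⟨N, hN⟩

def update (x : c0) (N : ℕ) (c : ℝ) : c0 := x + (c - x N) • single N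

lemma sum_smul_update_sub_sum_smul_update {n : ℕ} (w : Fin n → ℝ) (x : Fin n → c0) (N : ℕ)
    (c d : ℝ) : ∑ i, w i • update (x i) N c - ∑ i, w i • update (x i) N d =
      (∑ i, w i) • (c - d) • single N := by
  rw [← Finset.sum_sub_distrib, Finset.sum_smul (x := (c - d) • single N)]
  exact Finset.sum_congr rfl fun i _ => by simp only [update]; module

lemma norm_update_le {x : c0} (hx : ‖x‖ ≤ 1) (N : ℕ) {c : ℝ} (hc : |c| ≤ 1) :
    ‖update x N c‖ ≤ 1 := by
  refine (norm_le_iff zero_le_one).2 fun m => ?_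
  by_cases h : m = N
  · subst h; simpa [update] using hc
  · simpa [update, h] using (abs_apply_le_norm x m).trans hx

lemma update_mem_slice {f : c0 →L[ℝ] ℝ} {α : ℝ} {x : c0} (hx : ‖x‖ ≤ 1)
    (hfx : sSup (f '' closedBall 0 1) - α / 2 < f x) {N : ℕ} (hN : |f (single N)| < α / 4)
    {c : ℝ} (hc : |c| ≤ 1) : update x N c ∈ Slice (closedBall 0 1) f α := by
  refine ⟨mem_closedBall_zero_iff.2 (norm_update_le hx N hc), ?_⟩
  have hcx : |c - x N| ≤ 2 := by
    linarith [abs_sub c (x N), (abs_apply_le_norm x N).trans hx]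
  have hpert : |(c - x N) * f (single N)| ≤ α / 2 := by
    rw [abs_mul]
    nlinarith [abs_nonneg (c - x N), abs_nonneg (f (single N))]
  have hfu : f (update x N c) = f x + (c - x N) * f (single N) := by
    simp [update, map_add, map_smul]
  linarith [neg_abs_le ((c - x N) * f (single N))]

theorem sd2p : SD2P c0 := by
  intro n w f α hw hsum _ hα
  choose x hx hfx using fun i => exists_mem_closedBall_sSup_sub_lt (f i) (half_pos (hα i))
  obtain ⟨N, hN⟩ := exists_forall_abs_apply_single_lt f (δ := fun i => α i / 4)
    fun i => by linarith [hα i]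
  have hmem : ∀ c : ℝ, |c| ≤ 1 → ∑ i, w i • update (x i) N c ∈
      convComb w (fun i => Slice (closedBall (0 : c0) 1) (f i) (α i)) := fun c hc =>
    ⟨_, fun i => update_mem_slice (mem_closedBall_zero_iff.1 (hx i)) (hfx i) (hN i) hc, rfl⟩
  have hdist : dist (∑ i, w i • update (x i) N 1) (∑ i, w i • update (x i) N (-1)) = 2 := by
    rw [dist_eq_norm, sum_smul_update_sub_sum_smul_update, hsum, one_smul, norm_smul_single]
    norm_num
  have := diam_eq_of_subset_closedBall
    (convComb_subset_closedBall hw hsum fun i => slice_subset _ _ _)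
    (hmem 1 (by norm_num)) (hmem (-1) (by norm_num)) (by rw [hdist, mul_one])
  rwa [mul_one] at this

end C0

open scoped NNReal

def RenormedC0Prod : Type := c0 × c0

noncomputable section

namespace RenormedC0Prod

instance : AddCommGroup RenormedC0Prod := inferInstanceAs (AddCommGroup (c0 × c0))
instance : Module ℝ RenormedC0Prod := inferInstanceAs (Module ℝ (c0 × c0))

def fst : RenormedC0Prod →ₗ[ℝ] c0 := LinearMap.fst ℝ c0 c0

def snd : RenormedC0Prod →ₗ[ℝ] c0 := LinearMap.snd ℝ c0 c0

def tail : c0 →ₗ[ℝ] c0 where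
  toFun x := x - x 0 • C0.single 0
  map_add' x y := by simp only [ZeroAtInftyContinuousMap.add_apply]; module
  map_smul' a x := by
    simp only [ZeroAtInftyContinuousMap.smul_apply, smul_eq_mul, RingHom.id_apply]; module

lemma tail_apply (x : c0) : tail x = x - x 0 • C0.single 0 := rfl

lemma tail_apply_of_ne {m : ℕ} (hm : m ≠ 0) (x : c0) : tail x m = x m := by
  simp [tail_apply, hm]

lemma norm_tail_le (x : c0) : ‖tail x‖ ≤ ‖x‖ := by
  refine (C0.norm_le_iff (norm_nonneg x)).2 fun m => ?_
  by_cases hm : m = 0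
  · simp [tail_apply, hm]
  · simpa [tail_apply_of_ne hm] using C0.abs_apply_le_norm x m

lemma norm_le_norm_tail_add_abs (x : c0) : ‖x‖ ≤ ‖tail x‖ + |x 0| := by
  calc ‖x‖ = ‖tail x + x 0 • C0.single 0‖ := by rw [tail_apply, sub_add_cancel]
    _ ≤ ‖tail x‖ + |x 0| := (norm_add_le _ _).trans_eq (by rw [C0.norm_smul_single])

def eval₀ : c0 →ₗ[ℝ] ℝ where
  toFun x := x 0
  map_add' _ _ := rfl
  map_smul' _ _ := rfl

def tailSeminorm : Seminorm ℝ RenormedC0Prod :=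
  (normSeminorm ℝ c0).comp (tail ∘ₗ fst) ⊔ (normSeminorm ℝ c0).comp snd

/-- The Minkowski functional of the closed convex hull of `B_{c0 ⊕∞ c0} ∪ {±(2 e₀, 0)}`: the
paper's renorming, with `c0` in place of `C[0,1]`. -/
def hullSeminorm : Seminorm ℝ RenormedC0Prod :=
  tailSeminorm ⊔ (2⁻¹ : ℝ≥0) • ((normSeminorm ℝ ℝ).comp (eval₀ ∘ₗ fst) + tailSeminorm)

lemma tailSeminorm_apply (z : RenormedC0Prod) :
    tailSeminorm z = max ‖tail (fst z)‖ ‖snd z‖ := rfl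

lemma hullSeminorm_apply (z : RenormedC0Prod) :
    hullSeminorm z = max (tailSeminorm z) ((|fst z 0| + tailSeminorm z) / 2) := by
  simp [hullSeminorm, eval₀, Real.norm_eq_abs, div_eq_inv_mul, NNReal.smul_def, mul_add]

lemma tailSeminorm_le_hullSeminorm (z : RenormedC0Prod) : tailSeminorm z ≤ hullSeminorm z := by
  rw [hullSeminorm_apply]; exact le_max_left _ _

lemma abs_fst_zero_add_tailSeminorm_le (z : RenormedC0Prod) :
    |fst z 0| + tailSeminorm z ≤ 2 * hullSeminorm z := by
  rw [hullSeminorm_apply]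
  linarith [le_max_right (tailSeminorm z) ((|fst z 0| + tailSeminorm z) / 2)]

lemma hullSeminorm_le_max (z : RenormedC0Prod) : hullSeminorm z ≤ max ‖fst z‖ ‖snd z‖ := by
  have ht : tailSeminorm z ≤ max ‖fst z‖ ‖snd z‖ :=
    max_le_max (norm_tail_le _) le_rfl
  have h0 : |fst z 0| ≤ max ‖fst z‖ ‖snd z‖ :=
    (C0.abs_apply_le_norm _ _).trans (le_max_left _ _)
  rw [hullSeminorm_apply]
  exact max_le ht (by linarith)

lemma max_le_three_mul_hullSeminorm (z : RenormedC0Prod) :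
    max ‖fst z‖ ‖snd z‖ ≤ 3 * hullSeminorm z := by
  have h1 : ‖tail (fst z)‖ ≤ hullSeminorm z :=
    (le_max_left _ _).trans (tailSeminorm_le_hullSeminorm z)
  have h2 : ‖snd z‖ ≤ hullSeminorm z := (le_max_right _ _).trans (tailSeminorm_le_hullSeminorm z)
  have h3 := abs_fst_zero_add_tailSeminorm_le z
  have h4 := norm_le_norm_tail_add_abs (fst z)
  have h5 := apply_nonneg tailSeminorm z
  have h6 := apply_nonneg hullSeminorm z
  exact max_le (by linarith) (by linarith)

instance : NormedAddCommGroup RenormedC0Prod :=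
  AddGroupNorm.toNormedAddCommGroup
    { hullSeminorm.toAddGroupSeminorm with
      eq_zero_of_map_eq_zero' := fun z hz => by
        have h := max_le_three_mul_hullSeminorm z
        rw [show hullSeminorm z = 0 from hz, mul_zero] at h
        exact Prod.ext (norm_le_zero_iff.1 ((le_max_left _ _).trans h))
          (norm_le_zero_iff.1 ((le_max_right _ _).trans h)) }

lemma norm_def (z : RenormedC0Prod) : ‖z‖ = hullSeminorm z := rfl

instance : NormedSpace ℝ RenormedC0Prod :=
  ⟨fun a z => (map_smul_eq_mul hullSeminorm a z).le⟩

def ofProd : (c0 × c0) ≃L[ℝ] RenormedC0Prod :=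
  LinearEquiv.toContinuousLinearEquivOfBounds (LinearEquiv.refl ℝ (c0 × c0)) 1 3
    (fun z => (hullSeminorm_le_max z).trans_eq (one_mul _).symm)
    (fun z => max_le_three_mul_hullSeminorm z)

@[simp] lemma fst_ofProd (p : c0 × c0) : fst (ofProd p) = p.1 := rfl

@[simp] lemma snd_ofProd (p : c0 × c0) : snd (ofProd p) = p.2 := rfl

instance : CompleteSpace RenormedC0Prod :=
  (completeSpace_congr (e := ofProd.toLinearEquiv.toEquiv) ofProd.isUniformEmbedding).1
    inferInstance

lemma norm_le_max (z : RenormedC0Prod) : ‖z‖ ≤ max ‖fst z‖ ‖snd z‖ := hullSeminorm_le_max z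

lemma norm_snd_le (z : RenormedC0Prod) : ‖snd z‖ ≤ ‖z‖ :=
  (le_max_right _ _).trans (tailSeminorm_le_hullSeminorm z)

lemma abs_fst_apply_add_abs_snd_apply_le (z : RenormedC0Prod) (m : ℕ) :
    |fst z m| + |snd z m| ≤ 2 * ‖z‖ := by
  have h2 : |snd z m| ≤ tailSeminorm z := (C0.abs_apply_le_norm _ m).trans (le_max_right _ _)
  rw [norm_def]
  by_cases hm : m = 0
  · subst hm
    linarith [abs_fst_zero_add_tailSeminorm_le z]
  · have h1 : |fst z m| ≤ tailSeminorm z := by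
      have := (C0.abs_apply_le_norm (tail (fst z)) m).trans (le_max_left _ ‖snd z‖)
      rwa [tail_apply_of_ne hm] at this
    linarith [tailSeminorm_le_hullSeminorm z]

def halfDiff : RenormedC0Prod →L[ℝ] c0 :=
  LinearMap.mkContinuous ((2⁻¹ : ℝ) • (fst - snd)) 1 fun z => by
    rw [one_mul]
    refine (C0.norm_le_iff (norm_nonneg z)).2 fun m => ?_
    have := abs_fst_apply_add_abs_snd_apply_le z m
    simp only [LinearMap.smul_apply, LinearMap.sub_apply, ZeroAtInftyContinuousMap.smul_apply,
      ZeroAtInftyContinuousMap.sub_apply, smul_eq_mul, abs_mul, abs_inv, abs_two]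
    linarith [abs_sub (fst z m) (snd z m)]

lemma halfDiff_apply (z : RenormedC0Prod) : halfDiff z = (2⁻¹ : ℝ) • (fst z - snd z) := rfl

lemma norm_halfDiff_le (z : RenormedC0Prod) : ‖halfDiff z‖ ≤ ‖z‖ :=
  (halfDiff.le_opNorm z).trans
    (mul_le_of_le_one_left (norm_nonneg z) (LinearMap.mkContinuous_norm_le _ zero_le_one _))

def antidiag : c0 →ₗ[ℝ] RenormedC0Prod :=
  ofProd.toLinearEquiv.toLinearMap ∘ₗ LinearMap.prod LinearMap.id (-LinearMap.id)

lemma halfDiff_antidiag (x : c0) : halfDiff (antidiag x) = x := by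
  show (2⁻¹ : ℝ) • (x - -x) = x
  module

lemma norm_antidiag_le (x : c0) : ‖antidiag x‖ ≤ ‖x‖ :=
  (norm_le_max _).trans_eq (by simp [antidiag])

def diagonal : Submodule ℝ RenormedC0Prod := LinearMap.ker (halfDiff : RenormedC0Prod →ₗ[ℝ] c0)

instance isClosed_diagonal : IsClosed (diagonal : Set RenormedC0Prod) := halfDiff.isClosed_ker

lemma mem_diagonal {z : RenormedC0Prod} : z ∈ diagonal ↔ fst z = snd z := by
  rw [diagonal, LinearMap.mem_ker, ContinuousLinearMap.coe_coe, halfDiff_apply]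
  exact (smul_eq_zero_iff_right (M := c0) (by norm_num : (2⁻¹ : ℝ) ≠ 0)).trans sub_eq_zero

def diagonalEquiv : c0 ≃ₗᵢ[ℝ] diagonal where
  toFun x := ⟨ofProd (x, x), mem_diagonal.2 rfl⟩
  map_add' _ _ := rfl
  map_smul' _ _ := rfl
  invFun z := fst z
  left_inv _ := rfl
  right_inv z := Subtype.ext (Prod.ext rfl (mem_diagonal.1 z.2))
  norm_map' x := le_antisymm ((norm_le_max (ofProd (x, x))).trans_eq (by simp))
    (norm_snd_le (ofProd (x, x)))

def quotientDiagonalEquiv : (RenormedC0Prod ⧸ diagonal) ≃ₗᵢ[ℝ] c0 :=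
  LinearMap.quotKerIsometryEquivOfRightInverse _ antidiag halfDiff_antidiag norm_halfDiff_le
    norm_antidiag_le

def peak : RenormedC0Prod := ofProd ((2 : ℝ) • C0.single 0, 0)

lemma tailSeminorm_peak : tailSeminorm peak = 0 := by
  simp [tailSeminorm_apply, peak, tail_apply]

lemma norm_peak : ‖peak‖ = 1 := by
  rw [norm_def, hullSeminorm_apply, tailSeminorm_peak]
  norm_num [peak]

def peakFunctional : RenormedC0Prod →L[ℝ] ℝ :=
  LinearMap.mkContinuous ((2⁻¹ : ℝ) • (eval₀ ∘ₗ fst)) 1 fun z => by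
    have := abs_fst_apply_add_abs_snd_apply_le z 0
    simp only [LinearMap.smul_apply, LinearMap.comp_apply, eval₀, LinearMap.coe_mk, AddHom.coe_mk,
      smul_eq_mul, Real.norm_eq_abs, abs_mul, abs_inv, abs_two, one_mul]
    linarith [abs_nonneg (snd z 0)]

lemma peakFunctional_apply (z : RenormedC0Prod) : peakFunctional z = fst z 0 / 2 :=
  inv_mul_eq_div _ _

lemma peakFunctional_peak : peakFunctional peak = 1 := by
  norm_num [peakFunctional_apply, peak]

lemma sSup_peakFunctional_closedBall :
    sSup (peakFunctional '' closedBall (0 : RenormedC0Prod) 1) = 1 := by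
  refine IsGreatest.csSup_eq ⟨⟨peak, by simp [norm_peak], peakFunctional_peak⟩, ?_⟩
  rintro - ⟨z, hz, rfl⟩
  have := abs_fst_apply_add_abs_snd_apply_le z 0
  rw [mem_closedBall_zero_iff] at hz
  rw [peakFunctional_apply]
  linarith [le_abs_self (fst z 0), abs_nonneg (snd z 0)]

lemma peak_mem_slice {α : ℝ} (hα : 0 < α) :
    peak ∈ Slice (closedBall 0 1) peakFunctional α := by
  refine ⟨by simp [norm_peak], ?_⟩
  rw [sSup_peakFunctional_closedBall, peakFunctional_peak]
  linarith

lemma slice_peakFunctional_subset (α : ℝ) :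
    Slice (closedBall 0 1) peakFunctional α ⊆ closedBall peak (2 * α) := by
  rintro z ⟨hz, hfz⟩
  rw [mem_closedBall_zero_iff] at hz
  rw [sSup_peakFunctional_closedBall, peakFunctional_apply] at hfz
  have hz0 : |fst z 0| + tailSeminorm z ≤ 2 := by
    linarith [abs_fst_zero_add_tailSeminorm_le z, norm_def z]
  have htail : tailSeminorm (z - peak) ≤ tailSeminorm z := by
    simpa [tailSeminorm_peak] using map_sub_le_add tailSeminorm z peak
  have hfst : fst (z - peak) 0 = fst z 0 - 2 := by simp [peak]
  have h0 := le_abs_self (fst z 0)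
  have h1 := apply_nonneg tailSeminorm z
  rw [mem_closedBall, dist_eq_norm, norm_def, hullSeminorm_apply, hfst,
    abs_of_nonpos (by linarith)]
  exact max_le (by linarith) (by linarith)

end RenormedC0Prod

end

/-- the diameter two properties are not three-space properties: there are a
Banach space `Z` and a closed subspace `W` such that `W` and `Z/W` have the SD2P but the unit
ball of `Z` has slices of arbitrarily small diameter (so `Z` fails the slice-D2P). -/
theorem statement12 :
    ∃ (Z : Type) (_ : NormedAddCommGroup Z) (_ : NormedSpace ℝ Z) (_ : CompleteSpace Z)
      (W : Subspace ℝ Z) (_ : IsClosed (W : Set Z)),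
      SD2P W ∧ SD2P (Z ⧸ W) ∧
      ∀ ε > (0 : ℝ), ∃ (f : Z →L[ℝ] ℝ) (α : ℝ), f ≠ 0 ∧ 0 < α ∧
        (Slice (closedBall (0 : Z) 1) f α).Nonempty ∧
        Metric.diam (Slice (closedBall (0 : Z) 1) f α) < ε := by
  open RenormedC0Prod in
  refine ⟨RenormedC0Prod, inferInstance, inferInstance, inferInstance, diagonal, isClosed_diagonal,
    C0.sd2p.of_linearIsometryEquiv diagonalEquiv,
    C0.sd2p.of_linearIsometryEquiv quotientDiagonalEquiv.symm, fun ε hε => ?_⟩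
  have hα : 0 < ε / 5 := by positivity
  refine ⟨peakFunctional, ε / 5, fun h => by simpa [h] using peakFunctional_peak, hα,
    ⟨peak, peak_mem_slice hα⟩, ?_⟩
  calc diam (Slice (closedBall 0 1) peakFunctional (ε / 5))
      ≤ diam (closedBall peak (2 * (ε / 5))) :=
        diam_mono (slice_peakFunctional_subset _) isBounded_closedBall
    _ ≤ 2 * (2 * (ε / 5)) := diam_closedBall (by positivity)
    _ < ε := by linarith
end

section
/- Let X be a Banach space whose dual X* has the weak-star slice diameter two property, let W be a weak-star closed subspace of X* that is the range of a norm-one weak-star–continuous projection P on X* whose kernel is finite-dimensional. Then W has the weak-star slice diameter two property (slices taken with respect to the predual elements). -/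
/-!
Weak-star continuity of `P` gives a preadjoint point `x'` with `(P f) x = f x'`, and, since `I - P`
is weak-star continuous of finite rank, a decomposition `f - P f = ∑ i, f (y i) • k i`. As `P` maps
the slice `S(x', α)` of `B_{X*}` into the slice of `B_W` defined by `x`, it suffices to find
`f, g ∈ S(x', α)` with `‖f - g‖` close to `2` and all `f (y i) - g (y i)` small. By Rademacher's
theorem the convex function `t ↦ ‖x' + ∑ i, t i • y i‖` is differentiable at some small `t`; at
`v = x' + ∑ i, t i • y i`, Šmulian's lemma says that the functionals of a thin slice `S(v, δ)`
nearly agree on every `y i`, and such a slice lies in `S(x', α)` and has diameter `2` by hypothesis.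
When `x' = 0` the slice is the whole ball and `‖P‖ = 1` suffices.
-/

open Metric Set Filter Topology

theorem WeakDual.exists_apply_eq_of_continuous {𝕜 E : Type*} [NontriviallyNormedField 𝕜]
    [AddCommGroup E] [TopologicalSpace E] [Module 𝕜 E]
    (φ : StrongDual 𝕜 E →ₗ[𝕜] 𝕜) (hφ : Continuous fun f : WeakDual 𝕜 E => φ f) :
    ∃ x : E, ∀ f : StrongDual 𝕜 E, φ f = f x := by
  obtain ⟨x, hx⟩ := LinearMap.dualEmbedding_surjective (topDualPairing 𝕜 E) ⟨φ, hφ⟩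
  exact ⟨x, fun f => (congrArg (fun ψ : StrongDual 𝕜 (WeakDual 𝕜 E) => ψ f) hx).symm⟩

theorem ContinuousLinearMap.exists_eq_sum_smul_of_finiteDimensional_range
    {𝕜 F G : Type*} [NontriviallyNormedField 𝕜] [CompleteSpace 𝕜]
    [AddCommGroup F] [TopologicalSpace F] [Module 𝕜 F]
    [AddCommGroup G] [TopologicalSpace G] [Module 𝕜 G] [IsTopologicalAddGroup G]
    [ContinuousSMul 𝕜 G] [T2Space G]
    (T : F →L[𝕜] G) [FiniteDimensional 𝕜 (LinearMap.range (T : F →ₗ[𝕜] G))] :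
    ∃ (n : ℕ) (φ : Fin n → F →L[𝕜] 𝕜) (k : Fin n → G), ∀ f, T f = ∑ i, φ i f • k i := by
  let b := Module.finBasis 𝕜 (LinearMap.range (T : F →ₗ[𝕜] G))
  refine ⟨_, fun i => (LinearMap.toContinuousLinearMap (b.coord i)).comp T.rangeRestrict,
    fun i => b i, fun f => ?_⟩
  simp only [ContinuousLinearMap.comp_apply, LinearMap.coe_toContinuousLinearMap',
    Module.Basis.coord_apply]
  simpa using congrArg Subtype.val (b.sum_repr (T.rangeRestrict f)).symm

theorem WeakDual.exists_eq_sum_apply_smul_of_continuous {𝕜 E : Type*}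
    [NontriviallyNormedField 𝕜] [CompleteSpace 𝕜] [AddCommGroup E] [TopologicalSpace E]
    [Module 𝕜 E]
    (Q : StrongDual 𝕜 E →ₗ[𝕜] StrongDual 𝕜 E)
    (hQ : @Continuous (WeakDual 𝕜 E) (WeakDual 𝕜 E) _ _ Q)
    [FiniteDimensional 𝕜 (LinearMap.range Q)] :
    ∃ (n : ℕ) (y : Fin n → E) (k : Fin n → StrongDual 𝕜 E), ∀ f, Q f = ∑ i, f (y i) • k i := by
  let Qw : WeakDual 𝕜 E →L[𝕜] WeakDual 𝕜 E := ⟨Q, hQ⟩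
  have : FiniteDimensional 𝕜 (LinearMap.range (Qw : WeakDual 𝕜 E →ₗ[𝕜] WeakDual 𝕜 E)) := ‹_›
  obtain ⟨n, φ, k, hk⟩ := Qw.exists_eq_sum_smul_of_finiteDimensional_range
  choose y hy using fun i => exists_apply_eq_of_continuous (φ i).toLinearMap (φ i).continuous
  exact ⟨n, y, k, fun f => (hk f).trans (Finset.sum_congr rfl fun i _ => by rw [← hy i f]; rfl)⟩

theorem LipschitzWith.dense_differentiableAt {E F : Type*} [NormedAddCommGroup E]
    [NormedSpace ℝ E] [FiniteDimensional ℝ E] [NormedAddCommGroup F] [NormedSpace ℝ F]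
    [FiniteDimensional ℝ F] {C : NNReal} {f : E → F} (hf : LipschitzWith C f) :
    Dense {x | DifferentiableAt ℝ f x} :=
  let _ : MeasurableSpace E := borel E
  have _ : BorelSpace E := ⟨rfl⟩
  MeasureTheory.Measure.dense_of_ae
    (hf.ae_differentiableAt (μ := (Module.Basis.ofVectorSpace ℝ E).addHaar))

theorem Metric.le_diam_of_forall_sub_lt_dist {α : Type*} [PseudoMetricSpace α] {s : Set α}
    (hs : Bornology.IsBounded s) {c : ℝ} (h : ∀ ε > 0, ∃ a ∈ s, ∃ b ∈ s, c - ε < dist a b) :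
    c ≤ diam s :=
  le_of_forall_pos_le_add fun ε hε => by
    obtain ⟨a, ha, b, hb, hab⟩ := h ε hε
    linarith [dist_le_diam_of_mem hs ha hb]

section DualSlice

variable {X : Type*} [NormedAddCommGroup X] [NormedSpace ℝ X]

def dualSlice (v : X) (δ : ℝ) : Set (StrongDual ℝ X) := {f | ‖f‖ ≤ 1 ∧ ‖v‖ - δ < f v}

theorem apply_le_norm_of_norm_le_one {f : StrongDual ℝ X} (hf : ‖f‖ ≤ 1) (w : X) : f w ≤ ‖w‖ :=
  (Real.le_norm_self _).trans ((f.le_of_opNorm_le hf w).trans_eq (one_mul _))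

theorem sSup_image_apply_closedBall (x : X) :
    sSup ((fun f : StrongDual ℝ X => f x) '' closedBall 0 1) = ‖x‖ := by
  obtain ⟨g, hg, hgx⟩ := exists_dual_vector'' ℝ x
  refine IsGreatest.csSup_eq ⟨⟨g, mem_closedBall_zero_iff.2 hg, hgx⟩, ?_⟩
  rintro _ ⟨f, hf, rfl⟩
  exact apply_le_norm_of_norm_le_one (mem_closedBall_zero_iff.1 hf) x

theorem sep_closedBall_eq_dualSlice (x : X) (δ : ℝ) :
    {f ∈ closedBall (0 : StrongDual ℝ X) 1 |
      sSup ((fun g : StrongDual ℝ X => g x) '' closedBall 0 1) - δ < f x} = dualSlice x δ := by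
  simp only [sSup_image_apply_closedBall, dualSlice, mem_closedBall_zero_iff]

theorem dualSlice_mono {v : X} {δ δ' : ℝ} (h : δ ≤ δ') : dualSlice v δ ⊆ dualSlice v δ' :=
  fun _ ⟨hf, hfv⟩ => ⟨hf, by linarith⟩

theorem dualSlice_add_subset (x w : X) (δ : ℝ) :
    dualSlice (x + w) δ ⊆ dualSlice x (δ + 2 * ‖w‖) := by
  rintro f ⟨hf, hfv⟩
  refine ⟨hf, ?_⟩
  have hfw := apply_le_norm_of_norm_le_one hf w
  have hxw : ‖x‖ ≤ ‖x + w‖ + ‖w‖ := by simpa using norm_sub_le (x + w) w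
  rw [map_add] at hfv
  linarith

theorem exists_mem_dualSlice_lt_norm_sub {v : X} {δ ε : ℝ} (h : diam (dualSlice v δ) = 2)
    (hε : 0 < ε) : ∃ f ∈ dualSlice v δ, ∃ g ∈ dualSlice v δ, 2 - ε < ‖f - g‖ := by
  have hne : (dualSlice v δ).Nonempty := by
    by_contra! hempty
    rw [hempty, diam_empty] at h
    norm_num at h
  by_contra! hcon
  have := diam_le_of_forall_dist_le_of_nonempty hne fun f hf g hg =>
    (dist_eq_norm f g).trans_le (hcon f hf g hg)
  linarith

theorem eventually_abs_apply_sub_le_of_hasDerivAt_norm {v y : X} {d : ℝ}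
    (hd : HasDerivAt (fun s : ℝ => ‖v + s • y‖) d 0) {ε : ℝ} (hε : 0 < ε) :
    ∀ᶠ δ in 𝓝[>] 0, ∀ f ∈ dualSlice v δ, |f y - d| ≤ ε := by
  have hsmall : ∀ᶠ s in 𝓝 (0 : ℝ), |‖v + s • y‖ - ‖v‖ - s * d| ≤ ε / 2 * |s| := by
    simpa using (hasDerivAt_iff_isLittleO_nhds_zero.1 hd).def (half_pos hε)
  obtain ⟨s, ⟨hplus, hminus⟩, hs⟩ :=
    (((hsmall.and ((continuous_neg.tendsto' (0 : ℝ) 0 neg_zero).eventually hsmall)).filter_mono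
      nhdsWithin_le_nhds).and self_mem_nhdsWithin).exists (f := 𝓝[>] (0 : ℝ))
  filter_upwards [(eventually_lt_nhds (mul_pos hs (half_pos hε))).filter_mono nhdsWithin_le_nhds]
    with δ hδ f ⟨hf, hfv⟩
  rw [abs_of_pos hs, abs_le] at hplus
  rw [abs_neg, abs_of_pos hs, abs_le, neg_smul, ← sub_eq_add_neg] at hminus
  have hfplus : f v + s * f y ≤ ‖v + s • y‖ := by
    simpa using apply_le_norm_of_norm_le_one hf (v + s • y)
  have hfminus : f v - s * f y ≤ ‖v - s • y‖ := by
    simpa using apply_le_norm_of_norm_le_one hf (v - s • y)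
  have hupper : s * (f y - d) < s * ε := by linarith
  have hlower : s * (d - f y) < s * ε := by linarith
  rw [abs_sub_le_iff]
  exact ⟨(lt_of_mul_lt_mul_left hupper hs.le).le, (lt_of_mul_lt_mul_left hlower hs.le).le⟩

theorem eventually_abs_apply_sub_apply_le {ι : Type*} [Finite ι] {v : X} {y : ι → X}
    (hd : ∀ j, ∃ d, HasDerivAt (fun s : ℝ => ‖v + s • y j‖) d 0) {ε : ℝ} (hε : 0 < ε) :
    ∀ᶠ δ in 𝓝[>] 0, ∀ f ∈ dualSlice v δ, ∀ g ∈ dualSlice v δ, ∀ j,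
      |f (y j) - g (y j)| ≤ ε := by
  choose d hd using hd
  filter_upwards [eventually_all.2 fun j =>
    eventually_abs_apply_sub_le_of_hasDerivAt_norm (hd j) (half_pos hε)] with δ hδ f hf g hg j
  calc |f (y j) - g (y j)| ≤ |f (y j) - d j| + |d j - g (y j)| := abs_sub_le _ _ _
    _ ≤ ε / 2 + ε / 2 := add_le_add (hδ j f hf) (by rw [abs_sub_comm]; exact hδ j g hg)
    _ = ε := add_halves ε

theorem exists_mem_hasDerivAt_norm_add_linearCombination_add_smul {ι : Type*} [Fintype ι]
    (x : X) (y : ι → X) {U : Set (ι → ℝ)} (hU : IsOpen U) (hne : U.Nonempty) :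
    ∃ t ∈ U, ∀ j, ∃ d,
      HasDerivAt (fun s : ℝ => ‖x + Fintype.linearCombination ℝ y t + s • y j‖) d 0 := by
  classical
  let L := LinearMap.toContinuousLinearMap (Fintype.linearCombination ℝ y)
  have hlip := lipschitzWith_one_norm.comp ((isometry_add_left x).lipschitz.comp L.lipschitz)
  obtain ⟨t, ht, htU⟩ := hlip.dense_differentiableAt.exists_mem_open hU hne
  refine ⟨t, htU, fun j => ⟨_, HasDerivAt.congr_of_eventuallyEq
    (ht.hasFDerivAt.hasLineDerivAt (Pi.single j 1)) (Eventually.of_forall fun s => ?_)⟩⟩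
  simp [L, add_assoc]

theorem norm_sub_le_norm_sub_add_of_sub_eq_sum {ι : Type*} [Fintype ι] {y : ι → X}
    {k : ι → StrongDual ℝ X} {P : StrongDual ℝ X → StrongDual ℝ X}
    (hP : ∀ f, f - P f = ∑ i, f (y i) • k i) {f g : StrongDual ℝ X} {η : ℝ}
    (hfg : ∀ i, |f (y i) - g (y i)| ≤ η) :
    ‖f - g‖ ≤ ‖P f - P g‖ + (∑ i, ‖k i‖) * η := by
  have hsplit : f - g = (P f - P g) + ∑ i, (f (y i) - g (y i)) • k i := by
    rw [Finset.sum_congr rfl fun i _ => sub_smul (f (y i)) (g (y i)) (k i),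
      Finset.sum_sub_distrib, ← hP, ← hP]
    abel
  rw [hsplit, Finset.sum_mul]
  refine (norm_add_le _ _).trans (add_le_add le_rfl (norm_sum_le_of_le _ fun i _ => ?_))
  rw [norm_smul, Real.norm_eq_abs, mul_comm]
  exact mul_le_mul_of_nonneg_left (hfg i) (norm_nonneg _)

theorem exists_mem_dualSlice_lt_norm_map_sub_of_ne_zero
    (hslice : ∀ v : X, v ≠ 0 → ∀ δ > 0, diam (dualSlice v δ) = 2)
    {ι : Type*} [Fintype ι] (y : ι → X) (k : ι → StrongDual ℝ X)
    (P : StrongDual ℝ X → StrongDual ℝ X) (hP : ∀ f, f - P f = ∑ i, f (y i) • k i)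
    {x : X} (hx : x ≠ 0) {α ε : ℝ} (hα : 0 < α) (hε : 0 < ε) :
    ∃ f ∈ dualSlice x α, ∃ g ∈ dualSlice x α, 2 - ε < ‖P f - P g‖ := by
  set L := Fintype.linearCombination ℝ y
  obtain ⟨t, ht, hdiff⟩ := exists_mem_hasDerivAt_norm_add_linearCombination_add_smul x y
    (isOpen_lt (L.continuous_of_finiteDimensional.norm) continuous_const)
    (⟨0, by simp [hα, hx]⟩ : {t | ‖L t‖ < min (α / 2) ‖x‖}.Nonempty)
  obtain ⟨htα, htx⟩ : ‖L t‖ < α / 2 ∧ ‖L t‖ < ‖x‖ := lt_min_iff.1 ht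
  set v := x + L t
  have hv : v ≠ 0 := by
    have : ‖x‖ - ‖L t‖ ≤ ‖v‖ := by simpa using norm_sub_norm_le x (-L t)
    exact norm_pos_iff.1 (by linarith)
  obtain ⟨η, hη, hηk⟩ := exists_pos_mul_lt (half_pos hε) (∑ i, ‖k i‖)
  have hαt : 0 < α - 2 * ‖L t‖ := by linarith
  obtain ⟨δ, ⟨hcoord, hδα⟩, hδ⟩ := (((eventually_abs_apply_sub_apply_le hdiff hη).and
    ((eventually_lt_nhds hαt).filter_mono nhdsWithin_le_nhds)).and self_mem_nhdsWithin).exists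
  have hsub : dualSlice v δ ⊆ dualSlice x α :=
    (dualSlice_add_subset x (L t) δ).trans (dualSlice_mono (by linarith))
  obtain ⟨f, hf, g, hg, hfg⟩ := exists_mem_dualSlice_lt_norm_sub (hslice v hv δ hδ) (half_pos hε)
  refine ⟨f, hsub hf, g, hsub hg, ?_⟩
  linarith [norm_sub_le_norm_sub_add_of_sub_eq_sum hP (hcoord f hf g hg)]

theorem exists_mem_dualSlice_zero_lt_norm_map_sub (P : StrongDual ℝ X →L[ℝ] StrongDual ℝ X)
    (hP : 1 ≤ ‖P‖) {α ε : ℝ} (hα : 0 < α) (hε : 0 < ε) :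
    ∃ f ∈ dualSlice (0 : X) α, ∃ g ∈ dualSlice (0 : X) α, 2 - ε < ‖P f - P g‖ := by
  obtain ⟨f, hf, hPf⟩ := P.exists_lt_apply_of_lt_opNorm (show 1 - ε / 2 < ‖P‖ by linarith)
  have hmem : ∀ g : StrongDual ℝ X, ‖g‖ ≤ 1 → g ∈ dualSlice (0 : X) α :=
    fun g hg => ⟨hg, by simpa using hα⟩
  refine ⟨f, hmem f hf.le, -f, hmem (-f) (by rw [norm_neg]; exact hf.le), ?_⟩
  rw [map_neg, sub_neg_eq_add, ← two_smul ℝ, norm_smul, Real.norm_two]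
  linarith

theorem exists_apply_eq_apply_of_weakDual_continuous (P : StrongDual ℝ X →L[ℝ] StrongDual ℝ X)
    (hP : @Continuous (WeakDual ℝ X) (WeakDual ℝ X) _ _ P) (x : X) :
    ∃ x' : X, ∀ f, P f x = f x' :=
  WeakDual.exists_apply_eq_of_continuous ((ContinuousLinearMap.apply ℝ ℝ x).comp P).toLinearMap
    ((WeakBilin.eval_continuous _ x).comp hP)

theorem exists_sub_map_eq_sum_of_finiteDimensional_ker (P : StrongDual ℝ X →L[ℝ] StrongDual ℝ X)
    (hproj : ∀ f, P (P f) = P f) (hP : @Continuous (WeakDual ℝ X) (WeakDual ℝ X) _ _ P)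
    [FiniteDimensional ℝ (LinearMap.ker P.toLinearMap)] :
    ∃ (n : ℕ) (y : Fin n → X) (k : Fin n → StrongDual ℝ X), ∀ f, f - P f = ∑ i, f (y i) • k i :=
  have : FiniteDimensional ℝ (LinearMap.range (LinearMap.id - P.toLinearMap)) :=
    Submodule.finiteDimensional_of_le (S₂ := LinearMap.ker P.toLinearMap)
      (LinearMap.range_le_ker_iff.2 (by ext f; simp [hproj]))
  WeakDual.exists_eq_sum_apply_smul_of_continuous (LinearMap.id - P.toLinearMap)
    (continuous_id.sub hP)

def subspaceSlice (W : Subspace ℝ (StrongDual ℝ X)) (x : X) (α : ℝ) : Set W :=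
  {g ∈ closedBall (0 : W) 1 |
    sSup ((fun g : W => (g : StrongDual ℝ X) x) '' closedBall 0 1) - α < (g : StrongDual ℝ X) x}

theorem exists_mem_subspaceSlice_coe_eq_map {W : Subspace ℝ (StrongDual ℝ X)}
    {P : StrongDual ℝ X →L[ℝ] StrongDual ℝ X} (hrange : range P = (W : Set (StrongDual ℝ X)))
    (hproj : ∀ f, P (P f) = P f) (hnorm : ‖P‖ ≤ 1) {x x' : X} (hx' : ∀ f, P f x = f x')
    {α : ℝ} {f : StrongDual ℝ X} (hf : f ∈ dualSlice x' α) :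
    ∃ g ∈ subspaceSlice W x α, (g : StrongDual ℝ X) = P f := by
  have hPW (f : StrongDual ℝ X) : P f ∈ W := by
    rw [← SetLike.mem_coe, ← hrange]
    exact mem_range_self f
  have hW (g : W) : (g : StrongDual ℝ X) x = (g : StrongDual ℝ X) x' := by
    obtain ⟨f, hf⟩ : (g : StrongDual ℝ X) ∈ range P := hrange ▸ g.2
    rw [← hf]
    simpa [hproj] using hx' (P f)
  have hsup : sSup ((fun g : W => (g : StrongDual ℝ X) x) '' closedBall 0 1) ≤ ‖x'‖ := by
    refine csSup_le ((nonempty_closedBall.2 zero_le_one).image _) ?_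
    rintro _ ⟨g, hg, rfl⟩
    dsimp only
    rw [hW g]
    exact apply_le_norm_of_norm_le_one (mem_closedBall_zero_iff.1 hg) x'
  refine ⟨⟨P f, hPW f⟩, ⟨mem_closedBall_zero_iff.2 ((P.le_of_opNorm_le hnorm f).trans ?_), ?_⟩, rfl⟩
  · rw [one_mul]
    exact hf.1
  · show _ < P f x
    rw [hx']
    linarith [hf.2]

end DualSlice

theorem statement18_general {X : Type*} [NormedAddCommGroup X] [NormedSpace ℝ X]
    (hX : ∀ x : X, x ≠ 0 → ∀ α > (0 : ℝ),
      Metric.diam {f ∈ closedBall (0 : StrongDual ℝ X) 1 |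
        sSup ((fun g : StrongDual ℝ X => g x) '' closedBall 0 1) - α < f x} = 2)
    (W : Subspace ℝ (StrongDual ℝ X))
    (P : StrongDual ℝ X →L[ℝ] StrongDual ℝ X)
    (hrange : Set.range P = (W : Set (StrongDual ℝ X)))
    (hproj : ∀ f, P (P f) = P f) (hnorm : ‖P‖ = 1)
    (hwcont : @Continuous (WeakDual ℝ X) (WeakDual ℝ X) _ _ P)
    (hker : FiniteDimensional ℝ (LinearMap.ker P.toLinearMap)) :
    ∀ x : X, x ≠ 0 → ∀ α > (0 : ℝ),
      Metric.diam {g ∈ closedBall (0 : W) 1 |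
        sSup ((fun g : W => (g : StrongDual ℝ X) x) '' closedBall 0 1) - α
          < (g : StrongDual ℝ X) x} = 2 := by
  intro x _ α hα
  obtain ⟨x', hx'⟩ := exists_apply_eq_apply_of_weakDual_continuous P hwcont x
  obtain ⟨n, y, k, hyk⟩ := exists_sub_map_eq_sum_of_finiteDimensional_ker P hproj hwcont
  change diam (subspaceSlice W x α) = 2
  refine le_antisymm ((diam_le_of_subset_closedBall zero_le_one (sep_subset _ _)).trans_eq
    (mul_one 2)) (le_diam_of_forall_sub_lt_dist (isBounded_closedBall.subset (sep_subset _ _))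
    fun ε hε => ?_)
  obtain ⟨f, hf, g, hg, hfg⟩ : ∃ f ∈ dualSlice x' α, ∃ g ∈ dualSlice x' α, 2 - ε < ‖P f - P g‖ := by
    rcases eq_or_ne x' 0 with rfl | hx'0
    · exact exists_mem_dualSlice_zero_lt_norm_map_sub P hnorm.ge hα hε
    · exact exists_mem_dualSlice_lt_norm_map_sub_of_ne_zero
        (fun v hv δ hδ => sep_closedBall_eq_dualSlice v δ ▸ hX v hv δ hδ) y k P hyk hx'0 hα hε
  obtain ⟨f', hf', hf'P⟩ := exists_mem_subspaceSlice_coe_eq_map hrange hproj hnorm.le hx' hf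
  obtain ⟨g', hg', hg'P⟩ := exists_mem_subspaceSlice_coe_eq_map hrange hproj hnorm.le hx' hg
  refine ⟨f', hf', g', hg', ?_⟩
  rwa [Subtype.dist_eq, hf'P, hg'P, dist_eq_norm]

/-- weak-star version of Statement 3: if `X*` has the weak-star slice diameter
two property and `W` is a weak-star closed subspace of `X*` which is the range of a norm-one
weak-star continuous projection `P` on `X*` with finite-dimensional kernel, then `W` has the
weak-star slice diameter two property (slices given by predual elements). -/
theorem statement18 {X : Type*} [NormedAddCommGroup X] [NormedSpace ℝ X] [CompleteSpace X]
    (hX : ∀ x : X, x ≠ 0 → ∀ α > (0 : ℝ),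
      Metric.diam {f ∈ closedBall (0 : StrongDual ℝ X) 1 |
        sSup ((fun g : StrongDual ℝ X => g x) '' closedBall 0 1) - α < f x} = 2)
    (W : Subspace ℝ (StrongDual ℝ X))
    (hWclosed : @IsClosed (WeakDual ℝ X) _ (W : Set (StrongDual ℝ X)))
    (P : StrongDual ℝ X →L[ℝ] StrongDual ℝ X)
    (hrange : Set.range P = (W : Set (StrongDual ℝ X)))
    (hproj : ∀ f, P (P f) = P f) (hnorm : ‖P‖ = 1)
    (hwcont : @Continuous (WeakDual ℝ X) (WeakDual ℝ X) _ _ P)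
    (hker : FiniteDimensional ℝ (LinearMap.ker P.toLinearMap)) :
    ∀ x : X, x ≠ 0 → ∀ α > (0 : ℝ),
      Metric.diam {g ∈ closedBall (0 : W) 1 |
        sSup ((fun g : W => (g : StrongDual ℝ X) x) '' closedBall 0 1) - α
          < (g : StrongDual ℝ X) x} = 2 :=
  statement18_general hX W P hrange hproj hnorm hwcont hker
end
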